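/- The CRVR distance D need not satisfy the triangle inequality: there exists a weighted network on three vertices with positive weights and a cropping parameter ζ > 0 such that D_{13} > D_{12} + D_{23}. -/
import Mathlib

/-- The CRVR distance matrix of a weighted network with weights `w` and
cropping parameter `ζ`: `D i i = 0`, `D i j = 1 / w i j` if `i ≠ j` and
`w i j > ζ`, and `D i j = 1 / ζ` otherwise. -/
noncomputable def crvrD {n : ℕ} (w : Fin n → Fin n → ℝ) (ζ : ℝ) (i j : Fin n) : ℝ :=
  if i = j then 0 else if ζ < w i j then 1 / w i j else 1 / ζ

/-- The CRVR distance need not satisfy the triangle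
inequality: there is a weighted network on three vertices with symmetric
positive weights and a cropping parameter `ζ > 0` such that
`D 1 3 > D 1 2 + D 2 3`. -/
theorem crvrD_not_triangle :
    ∃ (w : Fin 3 → Fin 3 → ℝ) (ζ : ℝ), 0 < ζ ∧
      (∀ i j, 0 < w i j) ∧ (∀ i j, w i j = w j i) ∧
      crvrD w ζ 0 2 > crvrD w ζ 0 1 + crvrD w ζ 1 2 := by
  refine ⟨fun i j => if (i = 0 ∧ j = 2) ∨ (i = 2 ∧ j = 0) then 1 else 10, 2, by norm_num,
    ?_, ?_, ?_⟩
  · intro i j; beta_reduce; split <;> norm_num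
  · intro i j; fin_cases i <;> fin_cases j <;> norm_num [Fin.ext_iff]
  · simp only [crvrD]
    norm_num [Fin.ext_iff, show ((2:Fin 3):ℕ)=2 from rfl]
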